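/- arXiv:1311.5321 — 7 statements merged into one kernel-verified Lean document; each statement's English description precedes it below -/
import Mathlib

section
/- Let m ≥ 1 be an integer and let c and s be real numbers with s > c. Then there exists a positive integer N₀ such that for every integer N ≥ N₀ the integral ∫_{(0,∞)^m} ‖t‖^c · Π(t)^{-s} · ξ(t)^{-N} · (1 + t₁^{-1})^{-N} d×t is finite, where d×t denotes the product measure ∏_{i=1}^m dt_i/t_i on (0,∞)^m. -/
/-!
With `w = ξ(t) (1 + t₁⁻¹)`, the inequality `(1 + a⁻¹)(1 + a/b) ≥ 1 + b⁻¹` telescopes along the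
chain `t₁, …, tₘ` to `w ≥ 1 + tₖ⁻¹` for every `k`. Since `w ≥ 1`, for `N ≥ mM` this gives
`w^{-N} ≤ ∏ₖ (1 + tₖ⁻¹)^{-M}`, so the integrand is dominated by a product of one-variable functions
`(x + x⁻¹)^c x^{-s} (1 + x⁻¹)^{-M}`. Each is `O(x^{M-c-s})` at `0` and `O(x^{c-s})` at `∞`, hence
integrable against `dx/x` as soon as `c + s < M`, and Fubini finishes.
-/

open MeasureTheory Set

/-- The multiplicative Haar-type measure `dt/t` on `(0,∞) ⊆ ℝ`. -/
noncomputable def mulMeasure : Measure ℝ :=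
  (volume.restrict (Set.Ioi (0 : ℝ))).withDensity (fun t => ENNReal.ofReal t⁻¹)

/-- The product measure `d×t = ∏ dtᵢ/tᵢ` on `(0,∞)^m`, realized on `Fin m → ℝ`
(concentrated on the positive orthant). -/
noncomputable def mulMeasurePi (m : ℕ) : Measure (Fin m → ℝ) :=
  Measure.pi (fun _ => mulMeasure)

/-- For `t ∈ (0,∞)^m`, `‖t‖ := ∏ᵢ (tᵢ + tᵢ⁻¹)`. -/
noncomputable def tNorm {m : ℕ} (t : Fin m → ℝ) : ℝ :=
  ∏ i, (t i + (t i)⁻¹)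

/-- For `t ∈ (0,∞)^m`, `Π(t) := ∏ᵢ tᵢ`. -/
noncomputable def tProd {m : ℕ} (t : Fin m → ℝ) : ℝ :=
  ∏ i, t i

/-- For `t ∈ (0,∞)^m`, `ξ(t) := ∏_{i=1}^{m-1} (1 + tᵢ/tᵢ₊₁)` (an empty product is `1`). -/
noncomputable def xiProd {m : ℕ} (t : Fin m → ℝ) : ℝ :=
  ∏ i : Fin (m - 1), (1 + t ⟨(i : ℕ), by have := i.isLt; omega⟩ /
    t ⟨(i : ℕ) + 1, by have := i.isLt; omega⟩)

instance : SigmaFinite mulMeasure := by unfold mulMeasure; infer_instance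

theorem ae_pos_mulMeasurePi (m : ℕ) : ∀ᵐ t ∂mulMeasurePi m, ∀ i, 0 < t i :=
  Measure.ae_pi_le_pi <| Filter.eventually_pi fun _ =>
    (withDensity_absolutelyContinuous _ _).ae_le (ae_restrict_mem measurableSet_Ioi)

theorem integrable_mulMeasure_iff {f : ℝ → ℝ} :
    Integrable f mulMeasure ↔ IntegrableOn (fun x => f x * x⁻¹) (Ioi 0) := by
  rw [mulMeasure, integrable_withDensity_iff (by fun_prop)
    (ae_of_all _ fun _ => ENNReal.ofReal_lt_top)]
  refine integrable_congr ?_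
  filter_upwards [ae_restrict_mem measurableSet_Ioi] with x hx
  rw [ENNReal.toReal_ofReal (inv_nonneg.2 (le_of_lt hx))]

theorem integrable_mulMeasure_of_le_rpow {f : ℝ → ℝ} (hf : Measurable f) {C a b : ℝ}
    (ha : 0 < a) (hb : 0 < b) (h_zero : ∀ x ∈ Ioc 0 1, ‖f x‖ ≤ C * x ^ a)
    (h_infty : ∀ x ∈ Ioi 1, ‖f x‖ ≤ C * x ^ (-b)) :
    Integrable f mulMeasure := by
  rw [integrable_mulMeasure_iff, ← Ioc_union_Ioi_eq_Ioi zero_le_one]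
  have hmeas : Measurable fun x : ℝ => f x * x⁻¹ := by fun_prop
  refine IntegrableOn.union ?_ ?_
  · have hg : IntegrableOn (fun x : ℝ => C * x ^ (a - 1)) (Ioc 0 1) :=
      (intervalIntegrable_iff_integrableOn_Ioc_of_le zero_le_one).1 <|
        (intervalIntegral.intervalIntegrable_rpow' (by linarith)).const_mul C
    refine hg.mono' hmeas.aestronglyMeasurable ?_
    filter_upwards [ae_restrict_mem measurableSet_Ioc] with x hx
    rw [norm_mul, norm_inv, Real.norm_of_nonneg hx.1.le, Real.rpow_sub_one hx.1.ne', div_eq_mul_inv,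
      ← mul_assoc]
    exact mul_le_mul_of_nonneg_right (h_zero x hx) (inv_nonneg.2 hx.1.le)
  · have hg : IntegrableOn (fun x : ℝ => C * x ^ (-b - 1)) (Ioi 1) :=
      (integrableOn_Ioi_rpow_of_lt (by linarith) one_pos).const_mul C
    refine hg.mono' hmeas.aestronglyMeasurable ?_
    filter_upwards [ae_restrict_mem measurableSet_Ioi] with x (hx : 1 < x)
    have hx0 : 0 < x := one_pos.trans hx
    rw [norm_mul, norm_inv, Real.norm_of_nonneg hx0.le, Real.rpow_sub_one hx0.ne', div_eq_mul_inv,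
      ← mul_assoc]
    exact mul_le_mul_of_nonneg_right (h_infty x hx) (inv_nonneg.2 hx0.le)

theorem rpow_le_two_rpow_abs_mul_rpow {y z : ℝ} (c : ℝ) (hy : 0 < y) (hyz : y ≤ z)
    (hz : z ≤ 2 * y) : z ^ c ≤ 2 ^ |c| * y ^ c := by
  rcases le_or_gt 0 c with hc | hc
  · calc z ^ c ≤ (2 * y) ^ c := Real.rpow_le_rpow (hy.le.trans hyz) hz hc
      _ = 2 ^ |c| * y ^ c := by rw [Real.mul_rpow zero_le_two hy.le, abs_of_nonneg hc]
  · calc z ^ c ≤ y ^ c := Real.rpow_le_rpow_of_nonpos hy hyz hc.le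
      _ ≤ 2 ^ |c| * y ^ c :=
        le_mul_of_one_le_left (by positivity) (Real.one_le_rpow one_le_two (abs_nonneg c))

noncomputable def majorantFactor (c s M x : ℝ) : ℝ :=
  (x + x⁻¹) ^ c * x ^ (-s) * (1 + x⁻¹) ^ (-M)

theorem majorantFactor_le_of_le_one {c s M x : ℝ} (hM : 0 ≤ M) (hx : x ∈ Ioc 0 1) :
    majorantFactor c s M x ≤ 2 ^ |c| * x ^ (M - (c + s)) := by
  obtain ⟨hx0, hx1⟩ := hx
  have hxinv : 0 < x⁻¹ := inv_pos.2 hx0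
  have hx_le_inv : x ≤ x⁻¹ := hx1.trans (one_le_inv₀ hx0 |>.2 hx1)
  have hnorm : (x + x⁻¹) ^ c ≤ 2 ^ |c| * (x⁻¹) ^ c :=
    rpow_le_two_rpow_abs_mul_rpow c hxinv (by linarith) (by linarith)
  have hweight : (1 + x⁻¹) ^ (-M) ≤ (x⁻¹) ^ (-M) :=
    Real.rpow_le_rpow_of_nonpos hxinv (by linarith) (by linarith)
  calc majorantFactor c s M x
      ≤ 2 ^ |c| * (x⁻¹) ^ c * x ^ (-s) * (x⁻¹) ^ (-M) := by
        unfold majorantFactor; gcongr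
    _ = 2 ^ |c| * x ^ (M - (c + s)) := by
        rw [Real.inv_rpow hx0.le, Real.inv_rpow hx0.le, ← Real.rpow_neg hx0.le,
          ← Real.rpow_neg hx0.le, neg_neg, mul_assoc _ (x ^ (-c)), ← Real.rpow_add hx0,
          mul_assoc, ← Real.rpow_add hx0]
        ring_nf

theorem majorantFactor_le_of_one_lt {c s M x : ℝ} (hM : 0 ≤ M) (hx : 1 < x) :
    majorantFactor c s M x ≤ 2 ^ |c| * x ^ (-(s - c)) := by
  have hx0 : 0 < x := one_pos.trans hx
  have hnorm : (x + x⁻¹) ^ c ≤ 2 ^ |c| * x ^ c :=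
    rpow_le_two_rpow_abs_mul_rpow c hx0 (by have := inv_pos.2 hx0; linarith)
      (by have := inv_lt_one_of_one_lt₀ hx; linarith)
  have hweight : (1 + x⁻¹) ^ (-M) ≤ 1 :=
    Real.rpow_le_one_of_one_le_of_nonpos (by have := inv_pos.2 hx0; linarith) (by linarith)
  calc majorantFactor c s M x ≤ 2 ^ |c| * x ^ c * x ^ (-s) * 1 := by
        unfold majorantFactor; gcongr
    _ = 2 ^ |c| * x ^ (-(s - c)) := by
        rw [mul_one, mul_assoc, ← Real.rpow_add hx0]; ring_nf

theorem majorantFactor_nonneg {c s M x : ℝ} (hx : 0 < x) : 0 ≤ majorantFactor c s M x := by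
  unfold majorantFactor; positivity

theorem integrable_majorantFactor {c s M : ℝ} (hcs : c < s) (hM : c + s < M) (hM0 : 0 ≤ M) :
    Integrable (majorantFactor c s M) mulMeasure := by
  refine integrable_mulMeasure_of_le_rpow (by unfold majorantFactor; fun_prop)
    (sub_pos.2 hM) (sub_pos.2 hcs) (C := 2 ^ |c|) ?_ ?_
  · intro x hx
    rw [Real.norm_of_nonneg (majorantFactor_nonneg hx.1)]
    exact majorantFactor_le_of_le_one hM0 hx
  · intro x (hx : 1 < x)
    rw [Real.norm_of_nonneg (majorantFactor_nonneg (one_pos.trans hx))]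
    exact majorantFactor_le_of_one_lt hM0 hx

theorem one_add_inv_le_mul_one_add_div {a b : ℝ} (ha : 0 < a) (hb : 0 < b) :
    1 + b⁻¹ ≤ (1 + a⁻¹) * (1 + a / b) := by
  have hexpand : (1 + a⁻¹) * (1 + a / b) = 1 + b⁻¹ + (a⁻¹ + a / b) := by
    field_simp; ring
  rw [hexpand]
  have : 0 < a⁻¹ + a / b := by positivity
  linarith

theorem one_add_inv_le_prod_range_mul {u : ℕ → ℝ} (hu : ∀ i, 0 < u i) (k : ℕ) :
    1 + (u k)⁻¹ ≤ (∏ i ∈ Finset.range k, (1 + u i / u (i + 1))) * (1 + (u 0)⁻¹) := by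
  induction k with
  | zero => simp
  | succ k ih =>
    calc 1 + (u (k + 1))⁻¹ ≤ (1 + (u k)⁻¹) * (1 + u k / u (k + 1)) :=
          one_add_inv_le_mul_one_add_div (hu k) (hu (k + 1))
      _ ≤ (∏ i ∈ Finset.range k, (1 + u i / u (i + 1))) * (1 + (u 0)⁻¹) *
            (1 + u k / u (k + 1)) := by
          gcongr
          have := hu k; have := hu (k + 1); positivity
      _ = _ := by rw [Finset.prod_range_succ]; ring

theorem xiProd_eq_prod_range {m : ℕ} (t : Fin m → ℝ) (u : ℕ → ℝ)
    (hu : ∀ i (hi : i < m), u i = t ⟨i, hi⟩) :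
    xiProd t = ∏ i ∈ Finset.range (m - 1), (1 + u i / u (i + 1)) := by
  rw [xiProd, ← Fin.prod_univ_eq_prod_range]
  refine Finset.prod_congr rfl fun i _ => ?_
  rw [hu i (by omega), hu (i + 1) (by omega)]

theorem one_add_inv_le_xiProd_mul {m : ℕ} {t : Fin m → ℝ} (ht : ∀ i, 0 < t i) (k : Fin m) :
    1 + (t k)⁻¹ ≤ xiProd t * (1 + (t ⟨0, k.pos⟩)⁻¹) := by
  set u : ℕ → ℝ := fun i => if h : i < m then t ⟨i, h⟩ else 1
  have hu : ∀ i (hi : i < m), u i = t ⟨i, hi⟩ := fun i hi => dif_pos hi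
  have hu_pos : ∀ i, 0 < u i := fun i => by
    by_cases hi : i < m
    · rw [hu i hi]; exact ht _
    · simp [u, hi]
  rw [xiProd_eq_prod_range t u hu, ← hu k k.isLt, ← hu 0 k.pos]
  have hratio_pos : ∀ i, 0 < u i / u (i + 1) := fun i => div_pos (hu_pos i) (hu_pos (i + 1))
  refine (one_add_inv_le_prod_range_mul hu_pos k).trans <|
    mul_le_mul_of_nonneg_right ?_ (by have := hu_pos 0; positivity)
  exact Finset.prod_le_prod_of_subset_of_one_le (Finset.range_subset_range.2 (by omega))
    (fun i _ => by linarith [hratio_pos i])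
    (fun i _ _ => le_add_of_nonneg_right (hratio_pos i).le)

theorem xiProd_nonneg {m : ℕ} {t : Fin m → ℝ} (ht : ∀ i, 0 < t i) : 0 ≤ xiProd t :=
  Finset.prod_nonneg fun _ _ => add_nonneg zero_le_one (div_nonneg (ht _).le (ht _).le)

theorem xiProd_mul_rpow_neg_le_prod {m : ℕ} (hm : 0 < m) {t : Fin m → ℝ} (ht : ∀ i, 0 < t i)
    {M N : ℝ} (hM : 0 ≤ M) (hN : m * M ≤ N) :
    xiProd t ^ (-N) * (1 + (t ⟨0, hm⟩)⁻¹) ^ (-N) ≤ ∏ i, (1 + (t i)⁻¹) ^ (-M) := by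
  set w := xiProd t * (1 + (t ⟨0, hm⟩)⁻¹)
  have hbound : ∀ i, 1 + (t i)⁻¹ ≤ w := one_add_inv_le_xiProd_mul ht
  have hw : 1 ≤ w := by
    have : 0 < (t ⟨0, hm⟩)⁻¹ := inv_pos.2 (ht _)
    linarith [hbound ⟨0, hm⟩]
  calc xiProd t ^ (-N) * (1 + (t ⟨0, hm⟩)⁻¹) ^ (-N)
      = w ^ (-N) := (Real.mul_rpow (xiProd_nonneg ht) (by have := ht ⟨0, hm⟩; positivity)).symm
    _ ≤ w ^ (-M * m) := Real.rpow_le_rpow_of_exponent_le hw (by linarith)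
    _ = ∏ _ : Fin m, w ^ (-M) := by
        rw [Real.rpow_mul_natCast (by linarith), Finset.prod_const, Finset.card_fin]
    _ ≤ ∏ i, (1 + (t i)⁻¹) ^ (-M) := Finset.prod_le_prod (fun _ _ => by positivity)
        fun i _ => Real.rpow_le_rpow_of_nonpos (by have := ht i; positivity) (hbound i)
          (by linarith)

theorem integrand_le_prod_majorantFactor {m : ℕ} (hm : 0 < m) {t : Fin m → ℝ}
    (ht : ∀ i, 0 < t i) (c s : ℝ) {M N : ℝ} (hM : 0 ≤ M) (hN : m * M ≤ N) :
    tNorm t ^ c * tProd t ^ (-s) * xiProd t ^ (-N) * (1 + (t ⟨0, hm⟩)⁻¹) ^ (-N) ≤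
      ∏ i, majorantFactor c s M (t i) := by
  have hpos : ∀ i, 0 < t i + (t i)⁻¹ := fun i => by have := ht i; positivity
  calc tNorm t ^ c * tProd t ^ (-s) * xiProd t ^ (-N) * (1 + (t ⟨0, hm⟩)⁻¹) ^ (-N)
      = (∏ i, (t i + (t i)⁻¹) ^ c) * (∏ i, t i ^ (-s)) *
          (xiProd t ^ (-N) * (1 + (t ⟨0, hm⟩)⁻¹) ^ (-N)) := by
        rw [tNorm, tProd, ← Real.finsetProd_rpow _ _ fun i _ => (hpos i).le,
          ← Real.finsetProd_rpow _ _ fun i _ => (ht i).le]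
        ring
    _ ≤ (∏ i, (t i + (t i)⁻¹) ^ c) * (∏ i, t i ^ (-s)) * ∏ i, (1 + (t i)⁻¹) ^ (-M) :=
        mul_le_mul_of_nonneg_left (xiProd_mul_rpow_neg_le_prod hm ht hM hN) <|
          mul_nonneg (Finset.prod_nonneg fun i _ => Real.rpow_nonneg (hpos i).le c)
            (Finset.prod_nonneg fun i _ => Real.rpow_nonneg (ht i).le (-s))
    _ = ∏ i, majorantFactor c s M (t i) := by
        simp only [majorantFactor, Finset.prod_mul_distrib]

/-- Let `m ≥ 1` and let `c, s` be real numbers with `s > c`.  Then there is a positive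
integer `N₀` such that for all integers `N ≥ N₀` the integral
`∫_{(0,∞)^m} ‖t‖^c Π(t)^{-s} ξ(t)^{-N} (1+t₁⁻¹)^{-N} d×t` is finite. -/
theorem finiteness_of_zeta_majorant (m : ℕ) (hm : 1 ≤ m) (c s : ℝ) (hs : s > c) :
    ∃ N₀ : ℕ, 0 < N₀ ∧ ∀ N : ℕ, N₀ ≤ N →
      (∫⁻ t, ENNReal.ofReal
          (tNorm t ^ c * tProd t ^ (-s) * xiProd t ^ (-(N : ℝ)) *
            (1 + (t ⟨0, by omega⟩)⁻¹) ^ (-(N : ℝ)))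
        ∂(mulMeasurePi m)) < ⊤ := by
  set M := ⌊c + s⌋₊ + 1
  have hM : c + s < M := by simpa [M] using Nat.lt_floor_add_one (c + s)
  refine ⟨m * M, by positivity, fun N hN => ?_⟩
  have hmajorant : Integrable (fun t : Fin m → ℝ => ∏ i, majorantFactor c s M (t i))
      (mulMeasurePi m) :=
    Integrable.fintype_prod fun _ => integrable_majorantFactor hs hM (Nat.cast_nonneg M)
  refine lt_of_le_of_lt (lintegral_mono_ae ?_) hmajorant.lintegral_lt_top
  filter_upwards [ae_pos_mulMeasurePi m] with t ht
  exact ENNReal.ofReal_le_ofReal <| integrand_le_prod_majorantFactor hm ht c s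
    (Nat.cast_nonneg M) (by exact_mod_cast hN)
end

section
/- Fix integers n > r ≥ 1 and let F be a field of characteristic zero. Then every group homomorphism χ : R_r → ℂˣ is trivial on the subgroup { [1_r, u; 0, 1_{n−r}] : u ∈ M⁰_{r,n−r}(F) }; that is, χ([1_r, u; 0, 1_{n−r}]) = 1 for every u ∈ M⁰_{r,n−r}(F). (Consequently every character of R_r factors through the quotient map R_r → GL_r(F) × N_{n−r}(F), [g,u;0,h] ↦ (g,h).) -/
open Matrix

/-- The Rankin–Selberg subgroup `R_r ⊆ GL_n(F)`: block matrices `[g, u; 0, h]` with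
`g ∈ GL_r(F)`, `h ∈ N_{n-r}(F)` upper-triangular unipotent, and `u` an `r × (n-r)` matrix
whose first column (the column of index `r`) is zero. -/
def RSgroup (n r : ℕ) (F : Type*) [Field F] : Set (GL (Fin n) F) :=
  {g | (∀ i j : Fin n, r ≤ (i : ℕ) → (j : ℕ) < (i : ℕ) →
          (g : Matrix (Fin n) (Fin n) F) i j = 0) ∧
       (∀ i : Fin n, r ≤ (i : ℕ) → (g : Matrix (Fin n) (Fin n) F) i i = 1) ∧
       (∀ i j : Fin n, (i : ℕ) < r → (j : ℕ) = r → (g : Matrix (Fin n) (Fin n) F) i j = 0)}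

/-- The subgroup `{[1_r, u; 0, 1_{n-r}] : u ∈ M⁰_{r,n-r}(F)}` of `R_r`: unipotent block
matrices whose off-diagonal entries vanish except possibly at positions `(i, j)` with
`i < r` and `j > r` (in particular the column of index `r`, the first column of `u`,
vanishes). -/
def M0group (n r : ℕ) (F : Type*) [Field F] : Set (GL (Fin n) F) :=
  {g | (∀ i : Fin n, (g : Matrix (Fin n) (Fin n) F) i i = 1) ∧
       (∀ i j : Fin n, i ≠ j → ¬((i : ℕ) < r ∧ r < (j : ℕ)) →
          (g : Matrix (Fin n) (Fin n) F) i j = 0)}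

/-- Every character of the Rankin–Selberg subgroup `R_r` (i.e. every `ℂˣ`-valued function
that is multiplicative on `R_r`) is trivial on the subgroup
`{[1_r, u; 0, 1_{n-r}] : u ∈ M⁰_{r,n-r}(F)}`, where `F` has characteristic zero and
`n > r ≥ 1`. -/
theorem character_trivial_on_M0 (n r : ℕ) (hr : 1 ≤ r) (hn : r < n)
    (F : Type*) [Field F] [CharZero F]
    (χ : GL (Fin n) F → ℂˣ)
    (hχ : ∀ a b : GL (Fin n) F, a ∈ RSgroup n r F → b ∈ RSgroup n r F →
      χ (a * b) = χ a * χ b) :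
    ∀ g : GL (Fin n) F, g ∈ M0group n r F → χ g = 1 := by
  intro g hg
  obtain ⟨hdiag, hoff⟩ := hg
  set G : Matrix (Fin n) (Fin n) F := (g : Matrix (Fin n) (Fin n) F) with hGdef
  set c : Fin n → F := fun i => if (i : ℕ) < r then 2 else 1 with hc
  have hcne : ∀ i, c i ≠ 0 := by
    intro i; simp only [hc]; split
    · exact two_ne_zero
    · exact one_ne_zero
  have hdd : (diagonal c) * (diagonal fun i => (c i)⁻¹) = 1 := by
    rw [diagonal_mul_diagonal,
      show (fun i => c i * (c i)⁻¹) = fun _ : Fin n => (1 : F) from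
        funext fun i => mul_inv_cancel₀ (hcne i), diagonal_one]
  have hdd' : (diagonal fun i => (c i)⁻¹) * diagonal c = 1 := by
    rw [diagonal_mul_diagonal,
      show (fun i => (c i)⁻¹ * c i) = fun _ : Fin n => (1 : F) from
        funext fun i => inv_mul_cancel₀ (hcne i), diagonal_one]
  set d : GL (Fin n) F := ⟨diagonal c, diagonal fun i => (c i)⁻¹, hdd, hdd'⟩ with hd
  have hdmat : (d : Matrix (Fin n) (Fin n) F) = diagonal c := rfl
  have hdinvmat : ((d⁻¹ : GL (Fin n) F) : Matrix (Fin n) (Fin n) F)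
      = diagonal fun i => (c i)⁻¹ := rfl
  -- memberships
  have h1RS : (1 : GL (Fin n) F) ∈ RSgroup n r F := by
    refine ⟨?_, ?_, ?_⟩
    · intro i j _ hji
      have hij : i ≠ j := fun h => by subst h; omega
      simp [Units.val_one, one_apply, hij]
    · intro i _; simp [Units.val_one, one_apply]
    · intro i j hi hj
      have : i ≠ j := fun h => by subst h; omega
      simp [Units.val_one, one_apply, this]
  have hdRS : d ∈ RSgroup n r F := by
    refine ⟨?_, ?_, ?_⟩
    · intro i j hi hji
      have : i ≠ j := fun h => by subst h; omega
      simp [hdmat, diagonal_apply, this]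
    · intro i hi
      simp [hdmat, diagonal_apply, hc, Nat.not_lt.mpr hi]
    · intro i j hi hj
      have : i ≠ j := fun h => by subst h; omega
      simp [hdmat, diagonal_apply, this]
  have hdinvRS : d⁻¹ ∈ RSgroup n r F := by
    refine ⟨?_, ?_, ?_⟩
    · intro i j hi hji
      have : i ≠ j := fun h => by subst h; omega
      simp [hdinvmat, diagonal_apply, this]
    · intro i hi
      simp [hdinvmat, diagonal_apply, hc, Nat.not_lt.mpr hi]
    · intro i j hi hj
      have : i ≠ j := fun h => by subst h; omega
      simp [hdinvmat, diagonal_apply, this]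
  have hgRS : g ∈ RSgroup n r F := by
    refine ⟨?_, ?_, ?_⟩
    · intro i j hi hji
      exact hoff i j (fun h => by subst h; omega) (fun h => by omega)
    · intro i _; exact hdiag i
    · intro i j hi hj
      exact hoff i j (fun h => by subst h; omega) (fun h => by omega)
  have hdgRS : d * g ∈ RSgroup n r F := by
    have hmul : ((d * g : GL (Fin n) F) : Matrix (Fin n) (Fin n) F)
        = diagonal c * G := by rw [Units.val_mul, hdmat, hGdef]
    refine ⟨?_, ?_, ?_⟩
    · intro i j hi hji
      rw [hmul, diagonal_mul]
      rw [hoff i j (fun h => by subst h; omega) (fun h => by omega)]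
      ring
    · intro i hi
      rw [hmul, diagonal_mul, hdiag i]
      simp [hc, Nat.not_lt.mpr hi]
    · intro i j hi hj
      rw [hmul, diagonal_mul]
      rw [hoff i j (fun h => by subst h; omega) (fun h => by omega)]
      ring
  -- key matrix identity : d * g * d⁻¹ = g * g
  have hkey : d * g * d⁻¹ = g * g := by
    apply Units.ext
    show (d : Matrix (Fin n) (Fin n) F) * G * ((d⁻¹ : GL (Fin n) F) : Matrix (Fin n) (Fin n) F)
        = G * G
    rw [hdmat, hdinvmat]
    ext i j
    rw [mul_diagonal, diagonal_mul, Matrix.mul_apply]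
    by_cases hij : i = j
    · subst hij
      rw [hdiag i, mul_one, mul_inv_cancel₀ (hcne i)]
      rw [Finset.sum_eq_single i]
      · rw [hdiag i, one_mul]
      · intro k _ hk
        by_cases hc1 : (i : ℕ) < r ∧ r < (k : ℕ)
        · rw [hoff k i hk (fun h => by omega), mul_zero]
        · rw [hoff i k (fun h => hk h.symm) hc1, zero_mul]
      · intro h; exact absurd (Finset.mem_univ i) h
    · by_cases hcond : (i : ℕ) < r ∧ r < (j : ℕ)
      · have hci : c i = 2 := by simp [hc, hcond.1]
        have hcj : c j = 1 := by simp [hc, Nat.not_lt.mpr (le_of_lt hcond.2)]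
        rw [hci, hcj, inv_one, mul_one]
        have hsub : Finset.univ.sum (fun k => G i k * G k j)
            = ({i, j} : Finset (Fin n)).sum (fun k => G i k * G k j) := by
          refine (Finset.sum_subset (Finset.subset_univ _) ?_).symm
          intro k _ hk
          simp only [Finset.mem_insert, Finset.mem_singleton, not_or] at hk
          by_cases hc1 : (i : ℕ) < r ∧ r < (k : ℕ)
          · rw [hoff k j hk.2 (fun h => by omega), mul_zero]
          · rw [hoff i k (fun h => hk.1 h.symm) hc1, zero_mul]
        rw [hsub, Finset.sum_pair hij, hdiag i, hdiag j, one_mul, mul_one, two_mul]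
      · rw [hoff i j hij hcond, mul_zero, zero_mul]
        refine (Finset.sum_eq_zero ?_).symm
        intro k _
        by_cases hki : k = i
        · subst hki; rw [hoff k j hij hcond, mul_zero]
        · by_cases hkj : k = j
          · subst hkj; rw [hoff i k hij hcond, zero_mul]
          · by_cases hc1 : (i : ℕ) < r ∧ r < (k : ℕ)
            · rw [hoff k j hkj (fun h => by omega), mul_zero]
            · rw [hoff i k (fun h => hki h.symm) hc1, zero_mul]
  -- character computations
  have hχ1 : χ 1 = 1 := by
    have h := hχ 1 1 h1RS h1RS
    rw [mul_one] at h
    exact (mul_left_cancel (a := χ 1) (by rw [mul_one, ← h])).symm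
  have hdd1 : χ d * χ d⁻¹ = 1 := by
    rw [← hχ d d⁻¹ hdRS hdinvRS, mul_inv_cancel, hχ1]
  have hone : χ g * χ g = χ g := by
    calc χ g * χ g = χ (g * g) := (hχ g g hgRS hgRS).symm
    _ = χ (d * g * d⁻¹) := by rw [hkey]
    _ = χ (d * g) * χ d⁻¹ := hχ (d * g) d⁻¹ hdgRS hdinvRS
    _ = χ d * χ g * χ d⁻¹ := by rw [hχ d g hdRS hgRS]
    _ = χ g * (χ d * χ d⁻¹) := by rw [mul_comm (χ d) (χ g), mul_assoc]
    _ = χ g := by rw [hdd1, mul_one]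
  have := mul_right_cancel (b := χ g) (a := χ g) (c := 1) (by rw [one_mul]; exact hone)
  exact this
end

section
/- Fix integers n > r ≥ 0 and let F be a field. For every u ∈ U_r one has u N'_{n−r} u^{-1} ⊆ R_r; that is, for every ν in the image N'_{n−r} of N_{n−r}(F) under g ↦ diag(1_r, g), the conjugate u ν u^{-1} lies in the Rankin–Selberg subgroup R_r. -/
open Matrix

/-- The subgroup `U_r ⊆ GL_n(F)` of block matrices `[1_r, u; 0, 1_{n-r}]` where all columns
of `u` except possibly the first one (the column of index `r`) vanish. -/
def Ugroup (n r : ℕ) (F : Type*) [Field F] : Set (GL (Fin n) F) :=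
  {g | (∀ i : Fin n, (g : Matrix (Fin n) (Fin n) F) i i = 1) ∧
       (∀ i j : Fin n, i ≠ j → ¬((i : ℕ) < r ∧ (j : ℕ) = r) →
          (g : Matrix (Fin n) (Fin n) F) i j = 0)}

/-- The image `N'_{n-r}` of `N_{n-r}(F)` in `GL_n(F)` under `g ↦ diag(1_r, g)`:
unipotent matrices whose off-diagonal entries vanish except possibly at positions `(i, j)`
with `r ≤ i < j`. -/
def Ngroup' (n r : ℕ) (F : Type*) [Field F] : Set (GL (Fin n) F) :=
  {g | (∀ i : Fin n, (g : Matrix (Fin n) (Fin n) F) i i = 1) ∧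
       (∀ i j : Fin n, i ≠ j → ¬(r ≤ (i : ℕ) ∧ (i : ℕ) < (j : ℕ)) →
          (g : Matrix (Fin n) (Fin n) F) i j = 0)}

/-- For all `u ∈ U_r` and `ν ∈ N'_{n-r}`, the conjugate `u ν u⁻¹` lies in the
Rankin–Selberg subgroup `R_r` (here `n > r ≥ 0` and `F` is a field). -/
theorem conj_N_mem_RS (n r : ℕ) (hn : r < n) (F : Type*) [Field F]
    (u ν : GL (Fin n) F) (hu : u ∈ Ugroup n r F) (hν : ν ∈ Ngroup' n r F) :
    u * ν * u⁻¹ ∈ RSgroup n r F := by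
  obtain ⟨hA1, hA0⟩ := hu
  obtain ⟨hB1, hB0⟩ := hν
  set A : Matrix (Fin n) (Fin n) F := (u : Matrix (Fin n) (Fin n) F) with hAdef
  set B : Matrix (Fin n) (Fin n) F := (ν : Matrix (Fin n) (Fin n) F) with hBdef
  set E : Matrix (Fin n) (Fin n) F := A - 1 with hEdef
  -- entrywise vanishing of E
  have hE : ∀ i j : Fin n, ¬((i : ℕ) < r ∧ (j : ℕ) = r) → E i j = 0 := by
    intro i j h
    by_cases hij : i = j
    · subst hij
      simp [hEdef, Matrix.sub_apply, Matrix.one_apply, hA1 i]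
    · simp [hEdef, Matrix.sub_apply, Matrix.one_apply, hij, hA0 i j hij h]
  have hEr : ∀ i k : Fin n, (k : ℕ) ≠ r → E i k = 0 := fun i k h => hE i k (by omega)
  have hErow : ∀ i j : Fin n, r ≤ (i : ℕ) → E i j = 0 := fun i j h => hE i j (by omega)
  -- E * E = 0
  have hEE : E * E = 0 := by
    ext i j
    simp only [Matrix.mul_apply, Matrix.zero_apply]
    apply Finset.sum_eq_zero
    intro k _
    by_cases hk : (k : ℕ) = r
    · rw [hE k j (by omega), mul_zero]
    · rw [hEr i k hk, zero_mul]
  -- inverse of u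
  have hAC : A * (1 - E) = 1 := by
    have h1 : A = 1 + E := by rw [hEdef]; abel
    have h2 : (1 + E) * (1 - E) = 1 - E * E := by noncomm_ring
    rw [h1, h2, hEE, sub_zero]
  have hCinv : ((u⁻¹ : GL (Fin n) F) : Matrix (Fin n) (Fin n) F) = 1 - E := by
    rw [Matrix.coe_units_inv, ← hAdef, Matrix.inv_eq_right_inv hAC]
  -- B * E = E
  have hBE : B * E = E := by
    ext i j
    rw [Matrix.mul_apply, Finset.sum_eq_single i]
    · rw [hB1 i, one_mul]
    · intro k _ hki
      by_cases hbk : B i k = 0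
      · rw [hbk, zero_mul]
      · have h2 : r ≤ (i : ℕ) ∧ (i : ℕ) < (k : ℕ) := by
          by_contra hc
          exact hbk (hB0 i k (Ne.symm hki) hc)
        rw [hE k j (by omega), mul_zero]
    · intro h; exact absurd (Finset.mem_univ i) h
  -- E * B * E = 0
  have hEBE : E * B * E = 0 := by
    ext i j
    rw [Matrix.mul_apply]
    simp only [Matrix.zero_apply]
    apply Finset.sum_eq_zero
    intro k _
    by_cases hk : (k : ℕ) < r ∧ (j : ℕ) = r
    · have hEBik : (E * B) i k = 0 := by
        rw [Matrix.mul_apply]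
        apply Finset.sum_eq_zero
        intro l _
        by_cases hl : (l : ℕ) = r
        · have hlk : l ≠ k := by
            intro h; subst h; omega
          rw [hB0 l k hlk (by omega), mul_zero]
        · rw [hEr i l hl, zero_mul]
      rw [hEBik, zero_mul]
    · rw [hE k j hk, mul_zero]
  -- the key matrix identity
  have key : ((u * ν * u⁻¹ : GL (Fin n) F) : Matrix (Fin n) (Fin n) F) = B + E * B - E := by
    have : ((u * ν * u⁻¹ : GL (Fin n) F) : Matrix (Fin n) (Fin n) F)
        = A * B * (1 - E) := by
      rw [Units.val_mul, Units.val_mul, hCinv, ← hAdef, ← hBdef]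
    rw [this, show A = 1 + E by rw [hEdef]; abel]
    have h3 : (1 + E) * B * (1 - E) = B + E * B - B * E - E * B * E := by noncomm_ring
    rw [h3, hBE, hEBE, sub_zero]
  refine ⟨?_, ?_, ?_⟩
  · intro i j hi hji
    have hEB : (E * B) i j = 0 := by
      rw [Matrix.mul_apply]
      apply Finset.sum_eq_zero
      intro l _
      rw [hErow i l hi, zero_mul]
    have hij : i ≠ j := by intro h; subst h; omega
    rw [key, Matrix.sub_apply, Matrix.add_apply, hEB, hErow i j hi,
      hB0 i j hij (by omega)]
    ring
  · intro i hi
    have hEB : (E * B) i i = 0 := by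
      rw [Matrix.mul_apply]
      apply Finset.sum_eq_zero
      intro l _
      rw [hErow i l hi, zero_mul]
    rw [key, Matrix.sub_apply, Matrix.add_apply, hEB, hErow i i hi, hB1 i]
    ring
  · intro i j hi hj
    have hij : i ≠ j := by intro h; subst h; omega
    have hEB : (E * B) i j = E i j := by
      rw [Matrix.mul_apply, Finset.sum_eq_single j]
      · rw [hB1 j, mul_one]
      · intro l _ hlj
        have hl : (l : ℕ) ≠ r := by
          intro h
          exact hlj (Fin.ext (by omega))
        rw [hEr i l hl, zero_mul]
      · intro h; exact absurd (Finset.mem_univ j) h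
    rw [key, Matrix.sub_apply, Matrix.add_apply, hEB,
      hB0 i j hij (by omega)]
    ring
end

section
/- Let m ≥ 1 be an integer. The multiplication map P_m × Q_m → GL_m(ℝ), (p, q) ↦ pq, is injective, and its image equals the set S := { g ∈ GL_m(ℝ) : the lower-right (m−1)×(m−1) block of g is invertible }. Moreover S is open in GL_m(ℝ) and its complement GL_m(ℝ) \ S is a null set for Haar measure on GL_m(ℝ). -/
/-!
`P_m` and `Q_m` are the subgroups of `GL_m` fixing the first column, resp. the last
`m - 1` columns, of the identity; they meet trivially, so multiplication `P_m × Q_m → GL_m`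
is injective. By Cramer's rule the lower-right block of `g` is invertible iff
`(g⁻¹)₀₀ ≠ 0`, and this is exactly what makes the matrix `q'` with first column `g⁻¹ e₀`
and identity columns elsewhere invertible; then `g q' ∈ P_m` and `g = (g q') q'⁻¹`.
The complement `{g | (g⁻¹)₀₀ = 0}` is Haar-null by Fubini: for the matrices `w t ∈ Q_m`
with first column `(1, t, …, t^(m-1))`, a fixed `g` has `(w t)⁻¹ g` in the complement
only at the finitely many roots of the polynomial whose coefficients form the first row
of `g⁻¹`.
-/

open Matrix MeasureTheory

/-- Borel σ-algebra on `GL_m(ℝ)` (with its topology as a matrix group). -/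
noncomputable instance (m : ℕ) : MeasurableSpace (GL (Fin m) ℝ) := borel _

/-- `P_m ⊆ GL_m(ℝ)`: matrices whose first column equals the first standard basis vector,
i.e. matrices of the form `[1, *; 0, *]`. -/
def Pmir (m : ℕ) : Set (GL (Fin m) ℝ) :=
  {g | ∀ i j : Fin m, (j : ℕ) = 0 →
        (g : Matrix (Fin m) (Fin m) ℝ) i j = if (i : ℕ) = 0 then 1 else 0}

/-- `Q_m ⊆ GL_m(ℝ)`: matrices of the form `[*, 0; *, 1_{m-1}]`, i.e. whose last `m - 1`
columns agree with those of the identity matrix. -/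
def Qmir (m : ℕ) : Set (GL (Fin m) ℝ) :=
  {g | ∀ i j : Fin m, 1 ≤ (j : ℕ) →
        (g : Matrix (Fin m) (Fin m) ℝ) i j = if i = j then 1 else 0}

/-- `S ⊆ GL_m(ℝ)`: the invertible matrices whose lower-right `(m-1) × (m-1)` block is
invertible. -/
def Sset (m : ℕ) (hm : 1 ≤ m) : Set (GL (Fin m) ℝ) :=
  {g | IsUnit (Matrix.of fun i j : Fin (m - 1) =>
        (g : Matrix (Fin m) (Fin m) ℝ)
          ⟨(i : ℕ) + 1, by have := i.isLt; omega⟩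
          ⟨(j : ℕ) + 1, by have := j.isLt; omega⟩)}


instance Matrix.instLocallyCompactSpace {m n R : Type*} [Finite m] [Finite n]
    [TopologicalSpace R] [LocallyCompactSpace R] : LocallyCompactSpace (Matrix m n R) :=
  inferInstanceAs (LocallyCompactSpace (m → n → R))

instance Matrix.instSecondCountableTopology {m n R : Type*} [Countable m] [Countable n]
    [TopologicalSpace R] [SecondCountableTopology R] : SecondCountableTopology (Matrix m n R) :=
  inferInstanceAs (SecondCountableTopology (m → n → R))

instance MulOpposite.instSecondCountableTopology {M : Type*} [TopologicalSpace M]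
    [SecondCountableTopology M] : SecondCountableTopology Mᵐᵒᵖ :=
  MulOpposite.opHomeomorph.symm.isEmbedding.secondCountableTopology

instance Units.instSecondCountableTopology {M : Type*} [Monoid M] [TopologicalSpace M]
    [SecondCountableTopology M] : SecondCountableTopology Mˣ :=
  Units.isEmbedding_embedProduct.secondCountableTopology

instance (m : ℕ) : BorelSpace (GL (Fin m) ℝ) := ⟨rfl⟩

/-- Fubini on `{(t, g) | (w t)⁻¹ * g ∈ N}`: its `t`-slices are translates of `N`, its `g`-slices
are null. -/
theorem measure_eq_zero_of_null_translate_fibers {G X : Type*} [Group G] [MeasurableSpace G]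
    [MeasurableMul₂ G] [MeasurableInv G] [MeasurableSpace X]
    (μ : Measure G) [SFinite μ] [μ.IsMulLeftInvariant] (ν : Measure X) [SFinite ν] (hν : ν ≠ 0)
    {w : X → G} (hw : Measurable w) {N : Set G} (hN : MeasurableSet N)
    (hfiber : ∀ g, ν {t | (w t)⁻¹ * g ∈ N} = 0) : μ N = 0 := by
  set T : Set (X × G) := {p | (w p.1)⁻¹ * p.2 ∈ N}
  have hT : MeasurableSet T := hN.preimage ((hw.comp measurable_fst).inv.mul measurable_snd)
  have h_left : ν.prod μ T = ν Set.univ * μ N := by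
    rw [Measure.prod_apply hT]
    have hslice : ∀ t, μ (Prod.mk t ⁻¹' T) = μ N := fun t => measure_preimage_mul μ (w t)⁻¹ N
    simp_rw [hslice]
    rw [lintegral_const, mul_comm]
  have h_right : ν.prod μ T = 0 := by
    rw [Measure.prod_apply_symm hT]
    simp [T, hfiber]
  rw [h_right, eq_comm, mul_eq_zero, Measure.measure_univ_eq_zero] at h_left
  exact h_left.resolve_left hν

theorem Polynomial.finite_setOf_sum_mul_pow_eq_zero {R : Type*} [CommRing R] [IsDomain R]
    {n : ℕ} {c : Fin n → R} (hc : c ≠ 0) : {t : R | ∑ k, c k * t ^ (k : ℕ) = 0}.Finite := by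
  classical
  have hP : ofFn n c ≠ 0 := fun h => hc (injective_ofFn n (h.trans (map_zero _).symm))
  convert finite_setOfPred_isRoot hP using 2 with t
  simp [ofFn_eq_sum_monomial, eval_finsetSum]

namespace Matrix

variable {n R K : Type*} [Fintype n] [DecidableEq n] [CommRing R] [Field K]

theorem det_one_updateCol (j : n) (v : n → R) :
    ((1 : Matrix n n R).updateCol j v).det = v j := by
  rw [← cramer_apply, cramer_one]
  rfl

theorem inv_apply_zero_zero {m : ℕ} (A : Matrix (Fin (m + 1)) (Fin (m + 1)) K) :
    A⁻¹ 0 0 = (A.submatrix Fin.succ Fin.succ).det / A.det := by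
  rw [inv_def, Matrix.smul_apply, adjugate_fin_succ_eq_det_submatrix, Ring.inverse_eq_inv',
    Fin.succAbove_zero]
  simp [div_eq_inv_mul]

namespace GeneralLinearGroup

def fixingColumns (J : Set n) : Subgroup (GL n R) where
  carrier := {g | ∀ j ∈ J, (g : Matrix n n R) *ᵥ Pi.single j 1 = Pi.single j 1}
  mul_mem' {g h} hg hh j hj := by rw [Units.val_mul, ← mulVec_mulVec, hh j hj, hg j hj]
  one_mem' j _ := by rw [Units.val_one, one_mulVec]
  inv_mem' {g} hg j hj := by
    conv_lhs => rw [← hg j hj]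
    rw [mulVec_mulVec, ← Units.val_mul, inv_mul_cancel, Units.val_one, one_mulVec]

theorem mem_fixingColumns {J : Set n} {g : GL n R} :
    g ∈ fixingColumns J ↔ ∀ j ∈ J, (g : Matrix n n R) *ᵥ Pi.single j 1 = Pi.single j 1 :=
  Iff.rfl

theorem disjoint_fixingColumns_compl (J : Set n) :
    Disjoint (fixingColumns (R := R) J) (fixingColumns Jᶜ) := by
  rw [Subgroup.disjoint_def]
  intro g hJ hJc
  refine Units.ext (ext_of_mulVec_single fun j => ?_)
  rw [Units.val_one, one_mulVec]
  by_cases hj : j ∈ J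
  exacts [hJ j hj, hJc j hj]

theorem det_of_mem_fixingColumns_compl {j : n} {q : GL n R} (hq : q ∈ fixingColumns {j}ᶜ) :
    (q : Matrix n n R).det = q j j := by
  have hq' : (q : Matrix n n R) = (1 : Matrix n n R).updateCol j (fun i => q i j) := by
    ext i k
    rw [updateCol_apply]
    split_ifs with hk
    · rw [hk]
    · simpa [mulVec_single_one, one_apply, Pi.single_apply, eq_comm] using
        congrFun (hq k hk) i
  conv_lhs => rw [hq']
  exact det_one_updateCol j _

def oneUpdateCol (j : n) (v : n → K) (hv : v j ≠ 0) : GL n K :=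
  mkOfDetNeZero ((1 : Matrix n n K).updateCol j v) (by rwa [det_one_updateCol])

variable {j : n} {v : n → K} {hv : v j ≠ 0}

theorem oneUpdateCol_mulVec_single :
    (oneUpdateCol j v hv : Matrix n n K) *ᵥ Pi.single j 1 = v := by
  ext i
  simp [oneUpdateCol]

theorem oneUpdateCol_mem_fixingColumns_compl : oneUpdateCol j v hv ∈ fixingColumns {j}ᶜ := by
  intro k hk
  ext i
  simp_all [oneUpdateCol, one_apply, Pi.single_apply]

theorem exists_mem_fixingColumns_mul_iff (j : n) (g : GL n K) :
    (∃ p ∈ fixingColumns {j}, ∃ q ∈ fixingColumns {j}ᶜ, g = p * q) ↔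
      ((g⁻¹ : GL n K) : Matrix n n K) j j ≠ 0 := by
  constructor
  · rintro ⟨p, hp, q, hq, rfl⟩
    have hcol : (((p * q)⁻¹ : GL n K) : Matrix n n K) *ᵥ Pi.single j 1 =
        ((q⁻¹ : GL n K) : Matrix n n K) *ᵥ Pi.single j 1 := by
      rw [_root_.mul_inv_rev, Units.val_mul, ← mulVec_mulVec,
        (fixingColumns {j}).inv_mem hp j rfl]
    have hinv := congrFun hcol j
    simp only [mulVec_single_one, col_apply] at hinv
    rw [hinv, ← det_of_mem_fixingColumns_compl ((fixingColumns {j}ᶜ).inv_mem hq)]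
    exact det_ne_zero _
  · intro h
    set u := oneUpdateCol j (((g⁻¹ : GL n K) : Matrix n n K) *ᵥ Pi.single j 1)
      (by rwa [mulVec_single_one])
    refine ⟨g * u, ?_, u⁻¹, (fixingColumns {j}ᶜ).inv_mem oneUpdateCol_mem_fixingColumns_compl,
      by group⟩
    rintro k rfl
    rw [Units.val_mul, ← mulVec_mulVec, oneUpdateCol_mulVec_single, mulVec_mulVec,
      ← Units.val_mul, mul_inv_cancel, Units.val_one, one_mulVec]

theorem continuous_of_continuous_val {X : Type*} [TopologicalSpace X] [TopologicalSpace K]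
    [IsTopologicalDivisionRing K] {f : X → GL n K}
    (hf : Continuous fun x => (f x : Matrix n n K)) : Continuous f := by
  refine Units.continuous_iff.2 ⟨hf, ?_⟩
  simp_rw [coe_units_inv, inv_def, Ring.inverse_eq_inv']
  exact (hf.matrix_det.inv₀ fun x => det_ne_zero (f x)).smul hf.matrix_adjugate

end GeneralLinearGroup

end Matrix

open Matrix.GeneralLinearGroup

section

variable (n : ℕ)

theorem Pmir_eq_fixingColumns :
    Pmir (n + 1) = (fixingColumns {0} : Subgroup (GL (Fin (n + 1)) ℝ)) := by
  ext g
  simp [Pmir, mem_fixingColumns, funext_iff, Pi.single_apply]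

theorem Qmir_eq_fixingColumns :
    Qmir (n + 1) = (fixingColumns {0}ᶜ : Subgroup (GL (Fin (n + 1)) ℝ)) := by
  ext g
  simp [Qmir, mem_fixingColumns, funext_iff, Pi.single_apply, Nat.one_le_iff_ne_zero]
  exact ⟨fun h j hj i => h i j hj, fun h i j hj => h j hj i⟩

theorem Sset_eq_setOf_inv_apply_ne_zero (hm : 1 ≤ n + 1) :
    Sset (n + 1) hm =
      {g | ((g⁻¹ : GL (Fin (n + 1)) ℝ) : Matrix (Fin (n + 1)) (Fin (n + 1)) ℝ) 0 0 ≠ 0} := by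
  ext g
  change IsUnit ((g : Matrix (Fin (n + 1)) (Fin (n + 1)) ℝ).submatrix Fin.succ Fin.succ) ↔ _
  rw [isUnit_iff_isUnit_det, isUnit_iff_ne_zero, Set.mem_ofPred_eq, coe_units_inv,
    inv_apply_zero_zero, div_ne_zero_iff]
  simp [det_ne_zero g]

theorem measure_setOf_inv_apply_zero_zero_eq_zero (μ : Measure (GL (Fin (n + 1)) ℝ))
    [μ.IsHaarMeasure] :
    μ {g | ((g⁻¹ : GL (Fin (n + 1)) ℝ) : Matrix (Fin (n + 1)) (Fin (n + 1)) ℝ) 0 0 = 0} = 0 := by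
  let w : ℝ → GL (Fin (n + 1)) ℝ := fun t => oneUpdateCol 0 (fun k => t ^ (k : ℕ)) (by simp)
  have hw : Continuous w := continuous_of_continuous_val <|
    continuous_const.matrix_updateCol 0 (continuous_pi fun k => continuous_pow _)
  refine measure_eq_zero_of_null_translate_fibers μ volume (NeZero.ne volume) hw.measurable
    (isClosed_eq (Units.continuous_coe_inv.matrix_elem 0 0) continuous_const).measurableSet
    fun g => (Set.Finite.measure_zero ?_ _)
  have hrow :
      (fun k => ((g⁻¹ : GL (Fin (n + 1)) ℝ) : Matrix (Fin (n + 1)) (Fin (n + 1)) ℝ) 0 k) ≠ 0 := by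
    intro h
    have h1 := congrFun (congrFun g.inv_mul 0) 0
    simp only [coe_units_inv, funext_iff, Pi.zero_apply] at h
    simp [mul_apply, h] at h1
  -- `((w t)⁻¹ * g)⁻¹ 0 0 = ∑ k, g⁻¹ 0 k * t ^ k`
  convert Polynomial.finite_setOf_sum_mul_pow_eq_zero hrow using 2 with t
  simp only [Set.mem_ofPred_eq, _root_.mul_inv_rev, inv_inv, Units.val_mul, mul_apply]
  simp [w, oneUpdateCol]

end

/-- For `m ≥ 1`, the multiplication map `P_m × Q_m → GL_m(ℝ)` is injective, its image is
the set `S` of invertible matrices with invertible lower-right `(m-1) × (m-1)` block,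
`S` is open, and the complement of `S` is null for every Haar measure on `GL_m(ℝ)`. -/
theorem mirabolic_decomposition (m : ℕ) (hm : 1 ≤ m) :
    (∀ p₁ p₂ q₁ q₂ : GL (Fin m) ℝ, p₁ ∈ Pmir m → p₂ ∈ Pmir m → q₁ ∈ Qmir m →
        q₂ ∈ Qmir m → p₁ * q₁ = p₂ * q₂ → p₁ = p₂ ∧ q₁ = q₂) ∧
    ({g : GL (Fin m) ℝ | ∃ p ∈ Pmir m, ∃ q ∈ Qmir m, g = p * q} = Sset m hm) ∧
    IsOpen (Sset m hm) ∧
    (∀ (μ : Measure (GL (Fin m) ℝ)), μ.IsHaarMeasure → μ (Sset m hm)ᶜ = 0) := by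
  obtain ⟨n, rfl⟩ : ∃ n, m = n + 1 := ⟨m - 1, by omega⟩
  rw [Sset_eq_setOf_inv_apply_ne_zero, Pmir_eq_fixingColumns, Qmir_eq_fixingColumns]
  refine ⟨fun p₁ p₂ q₁ q₂ hp₁ hp₂ hq₁ hq₂ h => ?_, ?_, ?_, fun μ _ => ?_⟩
  · have := Subgroup.mul_injective_of_disjoint (disjoint_fixingColumns_compl {0})
      (a₁ := (⟨p₁, hp₁⟩, ⟨q₁, hq₁⟩)) (a₂ := (⟨p₂, hp₂⟩, ⟨q₂, hq₂⟩)) h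
    simpa [Prod.ext_iff] using this
  · ext g
    exact exists_mem_fixingColumns_mul_iff 0 g
  · exact isOpen_ne_fun (Units.continuous_coe_inv.matrix_elem 0 0) continuous_const
  · simpa only [Set.compl_ofPred, not_not] using measure_setOf_inv_apply_zero_zero_eq_zero n μ
end

section
/- Fix integers n > r ≥ 0 and let F be a field. (i) For every p ∈ P_{r,n−r} there exist u ∈ U_r and g' ∈ G'_{n−r} such that p ∈ R_r u g' (i.e., R_r p = R_r u g' as right cosets). (ii) If u₁, u₂ ∈ U_r and g'₁, g'₂ ∈ G'_{n−r} satisfy R_r u₁ g'₁ = R_r u₂ g'₂, then u₁ = u₂ and g'₁ (g'₂)^{-1} ∈ N'_{n−r}. (In other words, the map U_r × (N'_{n−r}\G'_{n−r}) → R_r\P_{r,n−r}, (u, N'_{n−r} g') ↦ R_r u g', is a well-defined bijection.) -/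
open Matrix

/-- The parabolic subgroup `P_{r,n-r} ⊆ GL_n(F)` of block upper-triangular matrices
`[g, u; 0, h]`. -/
def Parab (n r : ℕ) (F : Type*) [Field F] : Set (GL (Fin n) F) :=
  {g | ∀ i j : Fin n, r ≤ (i : ℕ) → (j : ℕ) < r → (g : Matrix (Fin n) (Fin n) F) i j = 0}

/-- The image `G'_{n-r}` of `GL_{n-r}(F)` in `GL_n(F)` under `g ↦ diag(1_r, g)`. -/
def Ggroup' (n r : ℕ) (F : Type*) [Field F] : Set (GL (Fin n) F) :=
  {g | ∀ i j : Fin n, ((i : ℕ) < r ∨ (j : ℕ) < r) →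
        (g : Matrix (Fin n) (Fin n) F) i j = if i = j then 1 else 0}

/-!
Write `n = r + m` and read elements of `GL_n` as `2 × 2` block matrices. An element of
`P_{r,n-r}` is `[A, B; 0, D]`; with `W = B D⁻¹` and `E` the matrix unit at `(0, 0)`,
`[A, B; 0, D] = [A, W - W E; 0, 1] · [1, A⁻¹ W E; 0, 1] · [1, 0; 0, D]`, which is (i).
For (ii), write `x · u₂ g'₂ = u₁ g'₁` with `x = [A, X; 0, K] ∈ R_r`, `uᵢ = [1, Vᵢ; 0, 1]` and
`g'ᵢ = [1, 0; 0, Dᵢ]`. Comparing blocks gives `A = 1`, `D₁ = K D₂` and `V₁ K = V₂ + X`. In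
column `0` the last identity reads `V₁ = V₂`, since `K` is upper unitriangular and `X` vanishes
there; and `g'₁ g'₂⁻¹ = [1, 0; 0, K] ∈ N'_{n-r}`.
-/

namespace Fin

variable {r m : ℕ}

@[simp] lemma val_lt_add (a : Fin r) (k : ℕ) : (a : ℕ) < r + k := by omega
@[simp] lemma val_ne_add (a : Fin r) (k : ℕ) : (a : ℕ) ≠ r + k := by omega
@[simp] lemma add_ne_val (a : Fin r) (k : ℕ) : r + k ≠ (a : ℕ) := by omega
@[simp] lemma val_ne_self (a : Fin r) : (a : ℕ) ≠ r := a.isLt.ne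
@[simp] lemma castAdd_ne_natAdd (a : Fin r) (b : Fin m) : castAdd m a ≠ natAdd r b := by
  simp [Fin.ext_iff]
@[simp] lemma natAdd_ne_castAdd (a : Fin r) (b : Fin m) : natAdd r b ≠ castAdd m a := by
  simp [Fin.ext_iff]

end Fin

namespace Matrix

def IsUpperUnitriangular {ι R : Type*} [LT ι] [Zero R] [One R] (K : Matrix ι ι R) : Prop :=
  K.BlockTriangular id ∧ ∀ i, K i i = 1

lemma isUpperUnitriangular_one {ι R : Type*} [Preorder ι] [DecidableEq ι] [Zero R] [One R] :
    IsUpperUnitriangular (1 : Matrix ι ι R) :=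
  ⟨blockTriangular_one, fun _ => one_apply_eq _⟩

lemma IsUpperUnitriangular.mul_apply_zero {ι R : Type*} {m : ℕ} [NeZero m] [NonAssocSemiring R]
    {K : Matrix (Fin m) (Fin m) R} (hK : K.IsUpperUnitriangular) (V : Matrix ι (Fin m) R)
    (a : ι) : (V * K) a 0 = V a 0 := by
  rw [mul_apply, Finset.sum_eq_single 0
    (fun c _ hc => by rw [hK.1 (Fin.pos_iff_ne_zero.2 hc), mul_zero]) (by simp), hK.2, mul_one]

end Matrix

namespace Matrix.GeneralLinearGroup

variable {r m : ℕ} {R : Type*} [CommRing R]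

variable (r m R) in
noncomputable def toBlockMatrix :
    GL (Fin (r + m)) R →* Matrix (Fin r ⊕ Fin m) (Fin r ⊕ Fin m) R :=
  (reindexRingEquiv R finSumFinEquiv.symm).toMonoidHom.comp (Units.coeHom _)

lemma toBlockMatrix_injective : Function.Injective (toBlockMatrix r m R) := fun _ _ h =>
  Units.ext ((reindexRingEquiv R finSumFinEquiv.symm).injective h)

lemma isUnit_toBlockMatrix (g : GL (Fin (r + m)) R) : IsUnit (toBlockMatrix r m R g) :=
  g.isUnit.map (reindexRingEquiv R finSumFinEquiv.symm)

lemma exists_toBlockMatrix_eq {M : Matrix (Fin r ⊕ Fin m) (Fin r ⊕ Fin m) R} (hM : IsUnit M) :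
    ∃ g, toBlockMatrix r m R g = M :=
  ⟨(hM.map (reindexRingEquiv R finSumFinEquiv.symm).symm).unit, by simp [toBlockMatrix]⟩

@[simp] lemma toBlocks₁₁_toBlockMatrix (g : GL (Fin (r + m)) R) (a b : Fin r) :
    toBlocks₁₁ (toBlockMatrix r m R g) a b =
      (g : Matrix _ _ R) (Fin.castAdd m a) (Fin.castAdd m b) := by
  simp [toBlockMatrix, toBlocks₁₁]

@[simp] lemma toBlocks₁₂_toBlockMatrix (g : GL (Fin (r + m)) R) (a : Fin r) (b : Fin m) :
    toBlocks₁₂ (toBlockMatrix r m R g) a b =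
      (g : Matrix _ _ R) (Fin.castAdd m a) (Fin.natAdd r b) := by
  simp [toBlockMatrix, toBlocks₁₂]

@[simp] lemma toBlocks₂₁_toBlockMatrix (g : GL (Fin (r + m)) R) (a : Fin m) (b : Fin r) :
    toBlocks₂₁ (toBlockMatrix r m R g) a b =
      (g : Matrix _ _ R) (Fin.natAdd r a) (Fin.castAdd m b) := by
  simp [toBlockMatrix, toBlocks₂₁]

@[simp] lemma toBlocks₂₂_toBlockMatrix (g : GL (Fin (r + m)) R) (a b : Fin m) :
    toBlocks₂₂ (toBlockMatrix r m R g) a b =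
      (g : Matrix _ _ R) (Fin.natAdd r a) (Fin.natAdd r b) := by
  simp [toBlockMatrix, toBlocks₂₂]

end Matrix.GeneralLinearGroup

namespace RankinSelberg

open Matrix.GeneralLinearGroup

variable {r m : ℕ} {F : Type*} [Field F]

lemma mem_Parab_iff {p : GL (Fin (r + m)) F} :
    p ∈ Parab (r + m) r F ↔ ∃ A B D, toBlockMatrix r m F p = fromBlocks A B 0 D := by
  simp only [ext_iff_blocks, toBlocks_fromBlocks₁₁, toBlocks_fromBlocks₁₂, toBlocks_fromBlocks₂₁,
    toBlocks_fromBlocks₂₂, exists_and_left, ↓existsAndEq, and_true, true_and,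
    exists_and_right]
  simp only [Parab, Set.mem_ofPred_eq, Fin.forall_fin_add, ← Matrix.ext_iff]
  simp

lemma mem_Ggroup'_iff {g : GL (Fin (r + m)) F} :
    g ∈ Ggroup' (r + m) r F ↔ ∃ D, toBlockMatrix r m F g = fromBlocks 1 0 0 D := by
  simp only [ext_iff_blocks, toBlocks_fromBlocks₁₁, toBlocks_fromBlocks₁₂, toBlocks_fromBlocks₂₁,
    toBlocks_fromBlocks₂₂, exists_and_left, ↓existsAndEq, and_true]
  simp only [Ggroup', Set.mem_ofPred_eq, Fin.forall_fin_add, ← Matrix.ext_iff]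
  simp [one_apply, forall_and, and_assoc]

lemma mem_Ngroup'_iff {g : GL (Fin (r + m)) F} :
    g ∈ Ngroup' (r + m) r F ↔
      ∃ K, toBlockMatrix r m F g = fromBlocks 1 0 0 K ∧ IsUpperUnitriangular K := by
  simp only [ext_iff_blocks, toBlocks_fromBlocks₁₁, toBlocks_fromBlocks₁₂, toBlocks_fromBlocks₂₁,
    toBlocks_fromBlocks₂₂, and_assoc, exists_and_left, ↓existsAndEq, true_and]
  simp only [Ngroup', Set.mem_ofPred_eq, Fin.forall_fin_add, ← Matrix.ext_iff,
    IsUpperUnitriangular, BlockTriangular]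
  simp [one_apply, forall_and, Nat.le_add_right_of_le, Fin.is_le']
  grind

variable [NeZero m]

lemma mem_RSgroup_iff {g : GL (Fin (r + m)) F} :
    g ∈ RSgroup (r + m) r F ↔ ∃ A X K, toBlockMatrix r m F g = fromBlocks A X 0 K ∧
      IsUpperUnitriangular K ∧ ∀ a, X a 0 = 0 := by
  simp only [ext_iff_blocks, toBlocks_fromBlocks₁₁, toBlocks_fromBlocks₁₂, toBlocks_fromBlocks₂₁,
    toBlocks_fromBlocks₂₂, and_assoc, exists_and_left, ↓existsAndEq, true_and,
    toBlocks₁₂_toBlockMatrix, exists_and_right]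
  simp only [RSgroup, Set.mem_ofPred_eq, Fin.forall_fin_add, ← Matrix.ext_iff,
    IsUpperUnitriangular, BlockTriangular]
  simp [forall_and, and_assoc]

lemma mem_Ugroup_iff {g : GL (Fin (r + m)) F} :
    g ∈ Ugroup (r + m) r F ↔
      ∃ V : Matrix (Fin r) (Fin m) F, toBlockMatrix r m F g = fromBlocks 1 V 0 1 ∧
        ∀ a b, b ≠ 0 → V a b = 0 := by
  simp only [ext_iff_blocks, toBlocks_fromBlocks₁₁, toBlocks_fromBlocks₁₂, toBlocks_fromBlocks₂₁,
    toBlocks_fromBlocks₂₂, ne_eq, and_assoc, exists_and_left, ↓existsAndEq,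
    toBlocks₁₂_toBlockMatrix, true_and]
  simp only [Ugroup, Set.mem_ofPred_eq, Fin.forall_fin_add, ← Matrix.ext_iff]
  simp [one_apply, forall_and]
  grind

theorem exists_mem_RSgroup_mul_of_mem_Parab {p : GL (Fin (r + m)) F}
    (hp : p ∈ Parab (r + m) r F) :
    ∃ u ∈ Ugroup (r + m) r F, ∃ g' ∈ Ggroup' (r + m) r F, ∃ ρ ∈ RSgroup (r + m) r F,
      p = ρ * (u * g') := by
  obtain ⟨A, B, D, hp⟩ := mem_Parab_iff.1 hp
  obtain ⟨hA, hD⟩ : IsUnit A ∧ IsUnit D :=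
    isUnit_fromBlocks_zero₂₁.1 (hp ▸ isUnit_toBlockMatrix p)
  set W := B * D⁻¹
  set E : Matrix (Fin m) (Fin m) F := single 0 0 1
  obtain ⟨u, hu⟩ := exists_toBlockMatrix_eq (r := r) (M := fromBlocks 1 (A⁻¹ * W * E) 0 1) (by simp)
  obtain ⟨g', hg'⟩ := exists_toBlockMatrix_eq (r := r) (M := fromBlocks 1 0 0 D) (by simpa using hD)
  obtain ⟨ρ, hρ⟩ := exists_toBlockMatrix_eq (M := fromBlocks A (W - W * E) 0 1) (by simpa using hA)
  refine ⟨u, mem_Ugroup_iff.2 ⟨_, hu, fun a b hb => by simp [E, hb]⟩,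
    g', mem_Ggroup'_iff.2 ⟨D, hg'⟩,
    ρ, mem_RSgroup_iff.2 ⟨A, _, 1, hρ, isUpperUnitriangular_one, fun a => by simp [E]⟩,
    toBlockMatrix_injective ?_⟩
  have hAV : A * (A⁻¹ * W * E * D) = W * E * D := by
    simp only [Matrix.mul_assoc, ← Matrix.mul_assoc A A⁻¹,
      A.mul_nonsing_inv ((isUnit_iff_isUnit_det A).1 hA), Matrix.one_mul]
  have hWD : W * D = B := by
    rw [Matrix.mul_assoc, D.nonsing_inv_mul ((isUnit_iff_isUnit_det D).1 hD), Matrix.mul_one]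
  rw [map_mul, map_mul, hp, hρ, hu, hg', fromBlocks_multiply, fromBlocks_multiply]
  simp [hAV, Matrix.sub_mul, hWD]

theorem eq_and_mul_inv_mem_Ngroup'_of_mul_inv_mem_RSgroup {u₁ u₂ g₁ g₂ : GL (Fin (r + m)) F}
    (hu₁ : u₁ ∈ Ugroup (r + m) r F) (hu₂ : u₂ ∈ Ugroup (r + m) r F)
    (hg₁ : g₁ ∈ Ggroup' (r + m) r F) (hg₂ : g₂ ∈ Ggroup' (r + m) r F)
    (h : (u₁ * g₁) * (u₂ * g₂)⁻¹ ∈ RSgroup (r + m) r F) :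
    u₁ = u₂ ∧ g₁ * g₂⁻¹ ∈ Ngroup' (r + m) r F := by
  obtain ⟨V₁, hu₁, hV₁⟩ := mem_Ugroup_iff.1 hu₁
  obtain ⟨V₂, hu₂, hV₂⟩ := mem_Ugroup_iff.1 hu₂
  obtain ⟨D₁, hg₁⟩ := mem_Ggroup'_iff.1 hg₁
  obtain ⟨D₂, hg₂⟩ := mem_Ggroup'_iff.1 hg₂
  obtain ⟨A, X, K, hx, hK, hX⟩ := mem_RSgroup_iff.1 h
  have hD₂ : IsUnit D₂ := (isUnit_fromBlocks_zero₂₁.1 (hg₂ ▸ isUnit_toBlockMatrix g₂)).2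
  have key : toBlockMatrix r m F (u₁ * g₁) =
      toBlockMatrix r m F ((u₁ * g₁) * (u₂ * g₂)⁻¹) * toBlockMatrix r m F (u₂ * g₂) := by
    rw [← map_mul, inv_mul_cancel_right]
  rw [hx, map_mul, map_mul, hu₁, hu₂, hg₁, hg₂] at key
  simp only [fromBlocks_multiply, Matrix.mul_one, Matrix.one_mul, Matrix.mul_zero,
    Matrix.zero_mul, add_zero, zero_add, fromBlocks_inj, true_and] at key
  obtain ⟨rfl, hV, rfl⟩ := key
  obtain ⟨_⟩ := hD₂.nonempty_invertible
  have hVK : V₁ * K = V₂ + X :=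
    (Matrix.mul_left_inj_of_invertible D₂).1
      (by rw [Matrix.add_mul, Matrix.mul_assoc, hV, Matrix.one_mul])
  have hV₁₂ : V₁ = V₂ := by
    ext a b
    by_cases hb : b = 0
    · subst hb
      simpa [hK.mul_apply_zero, hX] using congrFun (congrFun hVK a) 0
    · rw [hV₁ a b hb, hV₂ a b hb]
  refine ⟨toBlockMatrix_injective (by rw [hu₁, hu₂, hV₁₂]), mem_Ngroup'_iff.2 ⟨K, ?_, hK⟩⟩
  have hg : toBlockMatrix r m F g₁ = fromBlocks 1 0 0 K * toBlockMatrix r m F g₂ := by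
    rw [hg₁, hg₂, fromBlocks_multiply]
    simp
  rw [map_mul, hg, Matrix.mul_assoc, ← map_mul, mul_inv_cancel, map_one, Matrix.mul_one]

end RankinSelberg

/-- The map `U_r × (N'_{n-r}\G'_{n-r}) → R_r\P_{r,n-r}`, `(u, N' g') ↦ R_r u g'`,
is a well-defined bijection: (i) every `p ∈ P_{r,n-r}` lies in some coset `R_r u g'`;
(ii) if `R_r u₁ g'₁ = R_r u₂ g'₂` (i.e. `u₁ g'₁ (u₂ g'₂)⁻¹ ∈ R_r`) then `u₁ = u₂` and
`g'₁ (g'₂)⁻¹ ∈ N'_{n-r}`. -/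
theorem RS_coset_decomposition_of_parabolic (n r : ℕ) (hn : r < n)
    (F : Type*) [Field F] :
    (∀ p : GL (Fin n) F, p ∈ Parab n r F →
      ∃ u ∈ Ugroup n r F, ∃ g' ∈ Ggroup' n r F, ∃ ρ ∈ RSgroup n r F, p = ρ * (u * g')) ∧
    (∀ u₁ u₂ g₁' g₂' : GL (Fin n) F, u₁ ∈ Ugroup n r F → u₂ ∈ Ugroup n r F →
      g₁' ∈ Ggroup' n r F → g₂' ∈ Ggroup' n r F →
      (u₁ * g₁') * (u₂ * g₂')⁻¹ ∈ RSgroup n r F →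
      u₁ = u₂ ∧ g₁' * g₂'⁻¹ ∈ Ngroup' n r F) := by
  obtain ⟨m, rfl⟩ : ∃ m, n = r + (m + 1) := ⟨n - r - 1, by omega⟩
  exact ⟨fun _ hp => RankinSelberg.exists_mem_RSgroup_mul_of_mem_Parab hp,
    fun _ _ _ _ hu₁ hu₂ hg₁ hg₂ h =>
      RankinSelberg.eq_and_mul_inv_mem_Ngroup'_of_mul_inv_mem_RSgroup hu₁ hu₂ hg₁ hg₂ h⟩
end

section
/- Let F be a field and fix integers n ≥ 2 and 1 ≤ r ≤ n−1. Consider the right action of P°_{r+1} on the right coset space P_{r,n−r}\GL_n(F), given by (P_{r,n−r} g)·p° := P_{r,n−r}(g p°). This action has exactly two orbits: the orbit of the coset P_{r,n−r}·1_n, which equals { P_{r,n−r} g : (g_{r+1,r+1}, g_{r+2,r+1}, …, g_{n,r+1}) ≠ 0 }, and the orbit of the coset P_{r,n−r}·w, which is its complement; here w ∈ GL_n(F) is the permutation matrix that exchanges the standard basis vectors e₁ and e_{r+1} and fixes e_i for i ≠ 1, r+1. -/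
open Matrix

section AuxTwoOrbits

variable {n : ℕ} {F : Type*} [Field F]

/-- swap permutation as a GL element -/
def swapGL (a b : Fin n) (F : Type*) [Field F] : GL (Fin n) F where
  val := (Equiv.swap a b).permMatrix F
  inv := (Equiv.swap a b).permMatrix F
  val_inv := by
    rw [Equiv.Perm.permMatrix, ← PEquiv.toMatrix_trans, ← Equiv.toPEquiv_trans]; simp
  inv_val := by
    rw [Equiv.Perm.permMatrix, ← PEquiv.toMatrix_trans, ← Equiv.toPEquiv_trans]; simp

lemma swapGL_coe (a b : Fin n) :
    (swapGL a b F : Matrix (Fin n) (Fin n) F) = (Equiv.swap a b).permMatrix F := rfl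

lemma mul_permMatrix_apply (M : Matrix (Fin n) (Fin n) F) (f : Equiv.Perm (Fin n))
    (i j : Fin n) : (M * f.permMatrix F) i j = M i (f.symm j) := by
  rw [Equiv.Perm.permMatrix, PEquiv.mul_toMatrix_toPEquiv]; rfl

/-- identity matrix with column `i₀` replaced by `c`, as a GL element -/
def colGL (c : Fin n → F) (i₀ : Fin n) (hc : c i₀ ≠ 0) : GL (Fin n) F :=
  Matrix.GeneralLinearGroup.mkOfDetNeZero ((1 : Matrix (Fin n) (Fin n) F).updateCol i₀ c)
    (by rw [← Matrix.cramer_apply, Matrix.cramer_one]; exact hc)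

lemma colGL_coe (c : Fin n → F) (i₀ : Fin n) (hc : c i₀ ≠ 0) :
    (colGL c i₀ hc : Matrix (Fin n) (Fin n) F)
      = (1 : Matrix (Fin n) (Fin n) F).updateCol i₀ c := rfl

/-- if columns `j₀` of `p` and `g` agree, then column `j₀` of `p⁻¹ * g` is `e_{j₀}`. -/
lemma col_inv_mul (p g : GL (Fin n) F) (j₀ : Fin n)
    (hcol : ∀ i, (p : Matrix (Fin n) (Fin n) F) i j₀ = (g : Matrix (Fin n) (Fin n) F) i j₀)
    (i : Fin n) :
    ((p⁻¹ * g : GL (Fin n) F) : Matrix (Fin n) (Fin n) F) i j₀ = if i = j₀ then 1 else 0 := by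
  have h1 : ((p⁻¹ * g : GL (Fin n) F) : Matrix (Fin n) (Fin n) F) i j₀
      = ((p⁻¹ * p : GL (Fin n) F) : Matrix (Fin n) (Fin n) F) i j₀ := by
    simp only [Units.val_mul, Matrix.mul_apply]
    exact Finset.sum_congr rfl fun k _ => by rw [hcol]
  rw [h1, inv_mul_cancel]
  simp [Matrix.one_apply]

/-- column j₀ of `h * q` equals column j₀ of `h` when column j₀ of q is `e_{j₀}`. -/
lemma col_mul_e (h q : GL (Fin n) F) (j₀ : Fin n)
    (hq : ∀ i, (q : Matrix (Fin n) (Fin n) F) i j₀ = if i = j₀ then 1 else 0) (i : Fin n) :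
    ((h * q : GL (Fin n) F) : Matrix (Fin n) (Fin n) F) i j₀
      = (h : Matrix (Fin n) (Fin n) F) i j₀ := by
  simp only [Units.val_mul, Matrix.mul_apply]
  rw [Finset.sum_congr rfl fun k _ => by rw [hq]]
  simp [mul_ite]

lemma det_zero_aux {r : ℕ} (hr : r < n) (M : Matrix (Fin n) (Fin n) F)
    (h1 : ∀ i j : Fin n, r ≤ (i : ℕ) → (j : ℕ) < r → M i j = 0)
    (h2 : ∀ i : Fin n, r ≤ (i : ℕ) → M i ⟨r, hr⟩ = 0) : M.det = 0 := by
  have hbt : M.BlockTriangular (fun i : Fin n => if (i : ℕ) ≤ r then (0 : ℕ) else 1) := by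
    intro i j hij
    by_cases hi : (i : ℕ) ≤ r <;> by_cases hj : (j : ℕ) ≤ r <;>
      simp only [hi, hj, if_true, if_false] at hij <;> try omega
    rcases lt_or_eq_of_le hj with h | h
    · exact h1 i j (by omega) h
    · have : j = ⟨r, hr⟩ := Fin.ext h
      rw [this]; exact h2 i (by omega)
  rw [hbt.det]
  refine Finset.prod_eq_zero (i := 0) ?_ ?_
  · exact Finset.mem_image.2 ⟨⟨r, hr⟩, Finset.mem_univ _, by simp⟩
  · refine Matrix.det_eq_zero_of_row_eq_zero ⟨⟨r, hr⟩, by simp⟩ fun j => ?_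
    have hj : ((j : Fin n) : ℕ) ≤ r := by
      have := j.2; by_contra hcon
      simp [hcon] at this
    show M ⟨r, hr⟩ (j : Fin n) = 0
    rcases lt_or_eq_of_le hj with h | h
    · exact h1 _ _ (le_refl r) h
    · have : (j : Fin n) = ⟨r, hr⟩ := Fin.ext h
      rw [this]; exact h2 _ (le_refl r)

end AuxTwoOrbits


/-- `P°_{r+1} ⊆ GL_n(F)`: the stabilizer of the `(r+1)`-th standard basis vector
`e_{r+1}` of `F^n`, i.e. matrices whose column of index `r` equals `e_{r+1}`. -/
def Pcirc (n r : ℕ) (F : Type*) [Field F] : Set (GL (Fin n) F) :=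
  {g | ∀ i j : Fin n, (j : ℕ) = r →
        (g : Matrix (Fin n) (Fin n) F) i j = if (i : ℕ) = r then 1 else 0}

/-- The permutation matrix `w ∈ GL_n(F)` exchanging the standard basis vectors `e₁` and
`e_{r+1}` and fixing `e_i` for `i ≠ 1, r+1`. -/
def wElt (n r : ℕ) (h0 : 0 < n) (hr : r < n) (F : Type*) [Field F] : GL (Fin n) F where
  val := (Equiv.swap (⟨0, h0⟩ : Fin n) ⟨r, hr⟩).permMatrix F
  inv := (Equiv.swap (⟨0, h0⟩ : Fin n) ⟨r, hr⟩).permMatrix F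
  val_inv := by
    rw [Equiv.Perm.permMatrix, ← PEquiv.toMatrix_trans, ← Equiv.toPEquiv_trans]; simp
  inv_val := by
    rw [Equiv.Perm.permMatrix, ← PEquiv.toMatrix_trans, ← Equiv.toPEquiv_trans]; simp

/-- For a field `F` and `n ≥ 2`, `1 ≤ r ≤ n-1`, the right action of `P°_{r+1}` on
`P_{r,n-r}\GL_n(F)` has exactly two orbits: the orbit of the coset of `1` consists of the
cosets of those `g` whose `(r+1)`-th column has some nonzero entry among its last `n - r`
entries, and the orbit of the coset of `w` is its complement.  In terms of group elements:
`P_{r,n-r} ⋅ P°_{r+1}` equals the former set of `g`'s, and `P_{r,n-r} ⋅ w ⋅ P°_{r+1}` is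
its complement in `GL_n(F)`. -/
theorem two_orbits_of_stabilizer_on_parabolic_cosets (n r : ℕ) (hn : 2 ≤ n)
    (hr1 : 1 ≤ r) (hr2 : r ≤ n - 1) (F : Type*) [Field F] :
    {g : GL (Fin n) F | ∃ p ∈ Parab n r F, ∃ q ∈ Pcirc n r F, g = p * q} =
      {g : GL (Fin n) F | ∃ i j : Fin n, r ≤ (i : ℕ) ∧ (j : ℕ) = r ∧
        (g : Matrix (Fin n) (Fin n) F) i j ≠ 0} ∧
    {g : GL (Fin n) F | ∃ p ∈ Parab n r F, ∃ q ∈ Pcirc n r F,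
        g = p * wElt n r (by omega) (by omega) F * q} =
      {g : GL (Fin n) F | ∃ i j : Fin n, r ≤ (i : ℕ) ∧ (j : ℕ) = r ∧
        (g : Matrix (Fin n) (Fin n) F) i j ≠ 0}ᶜ := by
  have hrn : r < n := by omega
  have h0n : 0 < n := by omega
  set jr : Fin n := ⟨r, hrn⟩ with hjrdef
  set z0 : Fin n := ⟨0, h0n⟩ with hz0def
  -- q ∈ Pcirc iff column jr is e_jr (reformulation)
  have pcirc_iff : ∀ q : GL (Fin n) F, q ∈ Pcirc n r F ↔
      (∀ i, (q : Matrix (Fin n) (Fin n) F) i jr = if i = jr then 1 else 0) := by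
    intro q
    constructor
    · intro hq i
      rw [hq i jr rfl]
      by_cases h : (i : ℕ) = r
      · rw [if_pos h, if_pos (Fin.ext h)]
      · rw [if_neg h, if_neg (fun hh => h (by rw [hh]))]
    · intro hq i j hj
      have : j = jr := Fin.ext hj
      subst this
      rw [hq i]
      by_cases h : (i : ℕ) = r
      · rw [if_pos h, if_pos (Fin.ext h)]
      · rw [if_neg h, if_neg (fun hh => h (by rw [hh]))]
  constructor
  · ext g
    simp only [Set.mem_setOf_eq]
    constructor
    · rintro ⟨p, hp, q, hq, rfl⟩
      by_contra hcon
      push_neg at hcon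
      have hcol := col_mul_e p q jr ((pcirc_iff q).1 hq)
      have hdet : (p : Matrix (Fin n) (Fin n) F).det = 0 := by
        refine det_zero_aux hrn _ (fun i j hi hj => hp i j hi hj) (fun i hi => ?_)
        rw [← hcol i]
        exact hcon i jr hi rfl
      exact ((Matrix.isUnit_iff_isUnit_det _).mp p.isUnit).ne_zero hdet
    · rintro ⟨i₀, j, hi₀, hj, hne⟩
      have : j = jr := Fin.ext hj
      subst this
      set c : Fin n → F := fun i => (g : Matrix (Fin n) (Fin n) F) i jr with hcdef
      set A : GL (Fin n) F := colGL c i₀ hne with hAdef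
      set p : GL (Fin n) F := A * swapGL i₀ jr F with hpdef
      have hpv : (p : Matrix (Fin n) (Fin n) F)
          = (A : Matrix (Fin n) (Fin n) F) * (Equiv.swap i₀ jr).permMatrix F := rfl
      have hpcol : ∀ i, (p : Matrix (Fin n) (Fin n) F) i jr
          = (g : Matrix (Fin n) (Fin n) F) i jr := by
        intro i
        rw [hpv, mul_permMatrix_apply, Equiv.symm_swap, Equiv.swap_apply_right,
          colGL_coe, Matrix.updateCol_apply, if_pos rfl]
      refine ⟨p, ?_, p⁻¹ * g, ?_, (mul_inv_cancel_left p g).symm⟩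
      · intro i j hi hj
        have hji₀ : j ≠ i₀ := Fin.ne_of_val_ne (by omega)
        have hjjr : j ≠ jr := Fin.ne_of_val_ne (by simp [hjrdef]; omega)
        rw [hpv, mul_permMatrix_apply, Equiv.symm_swap,
          Equiv.swap_apply_of_ne_of_ne hji₀ hjjr, colGL_coe,
          Matrix.updateCol_apply, if_neg hji₀]
        exact Matrix.one_apply_ne (Fin.ne_of_val_ne (by omega))
      · exact (pcirc_iff _).2 (col_inv_mul p g jr hpcol)
  · ext g
    simp only [Set.mem_setOf_eq, Set.mem_compl_iff]
    constructor
    · rintro ⟨p, hp, q, hq, rfl⟩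
      rintro ⟨i, j, hi, hj, hne⟩
      have : j = jr := Fin.ext hj
      subst this
      apply hne
      have hcol := col_mul_e (p * wElt n r (by omega) (by omega) F) q jr ((pcirc_iff q).1 hq)
      rw [hcol i]
      have hwv : ((p * wElt n r (by omega) (by omega) F : GL (Fin n) F) :
          Matrix (Fin n) (Fin n) F)
          = (p : Matrix (Fin n) (Fin n) F) * (Equiv.swap z0 jr).permMatrix F := rfl
      rw [hwv, mul_permMatrix_apply, Equiv.symm_swap, Equiv.swap_apply_right]
      exact hp i z0 hi (by simp [hz0def]; omega)
    · intro hg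
      push_neg at hg
      have hzero : ∀ i : Fin n, r ≤ (i : ℕ) → (g : Matrix (Fin n) (Fin n) F) i jr = 0 :=
        fun i hi => hg i jr hi rfl
      have hex : ∃ i₀ : Fin n, (g : Matrix (Fin n) (Fin n) F) i₀ jr ≠ 0 := by
        by_contra h
        push_neg at h
        exact ((Matrix.isUnit_iff_isUnit_det _).mp g.isUnit).ne_zero
          (Matrix.det_eq_zero_of_column_eq_zero jr h)
      obtain ⟨i₀, hne⟩ := hex
      have hi₀r : (i₀ : ℕ) < r := by
        by_contra h
        exact hne (hzero i₀ (by omega))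
      set c : Fin n → F := fun i => (g : Matrix (Fin n) (Fin n) F) i jr with hcdef
      set A : GL (Fin n) F := colGL c i₀ hne with hAdef
      set p : GL (Fin n) F := A * swapGL i₀ z0 F with hpdef
      have hpv : (p : Matrix (Fin n) (Fin n) F)
          = (A : Matrix (Fin n) (Fin n) F) * (Equiv.swap i₀ z0).permMatrix F := rfl
      set w : GL (Fin n) F := wElt n r h0n hrn F with hwdef
      have hpwv : ((p * w : GL (Fin n) F) : Matrix (Fin n) (Fin n) F)
          = (p : Matrix (Fin n) (Fin n) F) * (Equiv.swap z0 jr).permMatrix F := rfl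
      have hpwcol : ∀ i, ((p * w : GL (Fin n) F) : Matrix (Fin n) (Fin n) F) i jr
          = (g : Matrix (Fin n) (Fin n) F) i jr := by
        intro i
        rw [hpwv, mul_permMatrix_apply, Equiv.symm_swap, Equiv.swap_apply_right,
          hpv, mul_permMatrix_apply, Equiv.symm_swap, Equiv.swap_apply_right,
          colGL_coe, Matrix.updateCol_apply, if_pos rfl]
      refine ⟨p, ?_, (p * w)⁻¹ * g, ?_, ?_⟩
      · intro i j hi hj
        rw [hpv, mul_permMatrix_apply, Equiv.symm_swap, colGL_coe,
          Matrix.updateCol_apply]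
        have hklt : ((Equiv.swap i₀ z0 j : Fin n) : ℕ) < r := by
          rw [Equiv.swap_apply_def]
          split_ifs <;> first | omega | (simp [hz0def]; omega)
        by_cases hk : Equiv.swap i₀ z0 j = i₀
        · rw [if_pos hk]
          exact hzero i hi
        · rw [if_neg hk]
          exact Matrix.one_apply_ne (Fin.ne_of_val_ne (by omega))
      · exact (pcirc_iff _).2 (col_inv_mul (p * w) g jr hpwcol)
      · exact (mul_inv_cancel_left (p * w) g).symm
end

section
/- Let F be a field and fix integers n > r ≥ 0. Then the product set P_{r,n−r} · P°_{r+1} = { p p° : p ∈ P_{r,n−r}, p° ∈ P°_{r+1} } equals { g ∈ GL_n(F) : (g_{r+1,r+1}, g_{r+2,r+1}, …, g_{n,r+1}) ≠ 0 }, i.e., the set of invertible matrices g such that the last n−r entries of the (r+1)-th column of g are not all zero. -/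
open Matrix

/-!
Every `q ∈ P°_{r+1}` fixes `e_{r+1}`, so `p * q` and `p` have the same `(r+1)`-th column. For
`p ∈ P_{r,n-r}` that column has a nonzero entry in rows `≥ r+1`: otherwise the `(r+1, r+1)` entry
of `p⁻¹ * p` would vanish, since `p⁻¹` is again block upper-triangular. Conversely, if `g` has
such a column `c`, pick `p ∈ P_{r,n-r}` with `(r+1)`-th column `c`; then `p⁻¹ * g` fixes `e_{r+1}`.
-/

theorem Matrix.det_updateCol_one {ι R : Type*} [Fintype ι] [DecidableEq ι] [CommRing R]
    (j : ι) (c : ι → R) : (updateCol (1 : Matrix ι ι R) j c).det = c j := by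
  rw [← cramer_apply, cramer_one, Module.End.one_apply]

section

variable {n r : ℕ} {F : Type*} [Field F]

/-- The blocks are indexed by `Prop`, ordered by `False < True`. -/
theorem mem_Parab_iff_blockTriangular (p : GL (Fin n) F) :
    p ∈ Parab n r F ↔
      BlockTriangular (p : Matrix (Fin n) (Fin n) F) (fun i => r ≤ (i : ℕ)) := by
  have hlt (i j : Fin n) : (r ≤ (j : ℕ)) < (r ≤ (i : ℕ)) ↔ r ≤ (i : ℕ) ∧ (j : ℕ) < r := by
    simp only [lt_iff_le_not_ge, le_Prop_eq]
    omega
  simp only [Parab, BlockTriangular, Set.mem_ofPred_eq, hlt]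
  exact ⟨fun h i j hij => h i j hij.1 hij.2, fun h i j hi hj => h ⟨hi, hj⟩⟩

theorem inv_mem_Parab {p : GL (Fin n) F} (hp : p ∈ Parab n r F) : p⁻¹ ∈ Parab n r F := by
  rw [mem_Parab_iff_blockTriangular] at hp ⊢
  have := p.invertible
  rw [coe_units_inv]
  exact blockTriangular_inv_of_blockTriangular hp

theorem mem_Pcirc_iff {g : GL (Fin n) F} {j : Fin n} (hj : (j : ℕ) = r) :
    g ∈ Pcirc n r F ↔ (g : Matrix (Fin n) (Fin n) F) *ᵥ Pi.single j 1 = Pi.single j 1 := by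
  subst hj
  simp only [Pcirc, Set.mem_ofPred_eq, mulVec_single_one, funext_iff, Pi.single_apply,
    ← Fin.ext_iff]
  exact ⟨fun h i => h i j rfl, fun h i k hk => hk ▸ h i⟩

theorem mul_mulVec_single_of_mem_Pcirc (p : GL (Fin n) F) {q : GL (Fin n) F}
    (hq : q ∈ Pcirc n r F) {j : Fin n} (hj : (j : ℕ) = r) :
    ((p * q : GL (Fin n) F) : Matrix (Fin n) (Fin n) F) *ᵥ Pi.single j 1 =
      (p : Matrix (Fin n) (Fin n) F) *ᵥ Pi.single j 1 := by
  rw [Units.val_mul, ← mulVec_mulVec, (mem_Pcirc_iff hj).1 hq]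

theorem exists_apply_ne_zero_of_mem_Parab {p : GL (Fin n) F} (hp : p ∈ Parab n r F)
    {j : Fin n} (hj : (j : ℕ) = r) :
    ∃ i : Fin n, r ≤ (i : ℕ) ∧ (p : Matrix (Fin n) (Fin n) F) i j ≠ 0 := by
  by_contra! hcol
  have hinv := inv_mem_Parab hp
  have hjj : ((p⁻¹ * p : GL (Fin n) F) : Matrix (Fin n) (Fin n) F) j j = 0 := by
    rw [Units.val_mul, mul_apply]
    refine Finset.sum_eq_zero fun k _ => ?_
    rcases lt_or_ge (k : ℕ) r with hk | hk
    · rw [hinv j k hj.ge hk, zero_mul]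
    · rw [hcol k hk, mul_zero]
  simp at hjj

/-- The witness is the identity with column `i` replaced by `c`, followed by the swap of
columns `i` and `j`: the columns left of `j` stay standard basis vectors, and the
determinant is `± c i`. -/
theorem exists_mem_Parab_mulVec_single {j : Fin n} (hj : (j : ℕ) = r) {c : Fin n → F}
    {i : Fin n} (hi : r ≤ (i : ℕ)) (hc : c i ≠ 0) :
    ∃ p ∈ Parab n r F, (p : Matrix (Fin n) (Fin n) F) *ᵥ Pi.single j 1 = c := by
  set P := (updateCol (1 : Matrix (Fin n) (Fin n) F) i c).submatrix id (Equiv.swap j i)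
  have hdet : P.det ≠ 0 := by
    rw [det_permute', det_updateCol_one]
    exact mul_ne_zero (by simp [Equiv.Perm.sign_swap']; split_ifs <;> simp) hc
  refine ⟨GeneralLinearGroup.mkOfDetNeZero P hdet, fun a b ha hb => ?_, ?_⟩
  · have hbi : b ≠ i := by omega
    have hbj : b ≠ j := by omega
    have hab : a ≠ b := by omega
    simp [P, Equiv.swap_apply_of_ne_of_ne hbj hbi, updateCol_ne hbi, one_apply_ne hab]
  · ext a
    simp [P]

end

/-- For a field `F` and `n > r ≥ 0`, the product set `P_{r,n-r} ⋅ P°_{r+1}` equals the set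
of invertible matrices `g` such that the last `n - r` entries of the `(r+1)`-th column of
`g` are not all zero. -/
theorem parabolic_mul_stabilizer (n r : ℕ) (hn : r < n) (F : Type*) [Field F] :
    {g : GL (Fin n) F | ∃ p ∈ Parab n r F, ∃ q ∈ Pcirc n r F, g = p * q} =
      {g : GL (Fin n) F | ∃ i j : Fin n, r ≤ (i : ℕ) ∧ (j : ℕ) = r ∧
        (g : Matrix (Fin n) (Fin n) F) i j ≠ 0} := by
  ext g
  constructor
  · rintro ⟨p, hp, q, hq, rfl⟩
    obtain ⟨i, hi, hpi⟩ := exists_apply_ne_zero_of_mem_Parab hp (j := ⟨r, hn⟩) rfl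
    have hcol := congrFun (mul_mulVec_single_of_mem_Pcirc p hq (j := ⟨r, hn⟩) rfl) i
    simp only [mulVec_single_one, col_apply] at hcol
    exact ⟨i, ⟨r, hn⟩, hi, rfl, hcol ▸ hpi⟩
  · rintro ⟨i, j, hi, hj, hgij⟩
    obtain ⟨p, hp, hpcol⟩ := exists_mem_Parab_mulVec_single hj hi
      (c := (g : Matrix (Fin n) (Fin n) F) *ᵥ Pi.single j 1) (by simpa [mulVec_single_one])
    refine ⟨p, hp, p⁻¹ * g, (mem_Pcirc_iff hj).2 ?_, (mul_inv_cancel_left p g).symm⟩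
    rw [Units.val_mul, ← mulVec_mulVec, ← hpcol, mulVec_mulVec, ← Units.val_mul, inv_mul_cancel,
      Units.val_one, one_mulVec]
end
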